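/- Let g1 be an element of Thompson's group V with N(g1) ≥ 4 such that the word 0 is a strict prefix of the range code of some branch of g1. Write the reduced representation of g1 with domain codes u_1 < u_2 < … < u_n and range codes t_1 < t_2 < … < t_n (both in lexicographic order), and let k be the index such that u_1 → t_k is a branch of g1. Let h be the element of Thompson's group T with the branches t_k → u_1, t_{k+1} → u_2, …, t_{k−1} → u_n (indices of t taken cyclically modulo n). Let M be a positive integer, let m = 1 + M·N(g1), let g2 = g1·x_m and g3 = g2·h. Then: (1) for every constant C ≥ 1 such that |t|_B ≤ C·N(t) for all t ∈ T, one has |h|_B ≤ C·N(g1); (2) N(g3) ≥ (M−1)·N(g1); (3) ℓ0(g3) ≤ N(g1) and 0^{ℓ0(g3)} → 0^{ℓ0(g3)} is a branch of g3. -/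

import Mathlib

/-!
Formalization framework for Thompson's groups `F ≤ T ≤ V` acting on the
Cantor set `{0,1}^ℕ`.  Elements of `V` are permutations of the Cantor set
admitting a finite table of branches `u → v` (complete prefix codes) with
`g(uω) = vω`.  Products in the paper are composed left-to-right, i.e. the
paper's `g·h` is `Equiv.trans g h` (equivalently `h * g` in `Equiv.Perm`).
-/

abbrev CSeq : Type := ℕ → Bool
abbrev VPerm : Type := Equiv.Perm CSeq

/-- Concatenation of a finite binary word with an infinite binary word. -/
def app (u : List Bool) (ω : CSeq) : CSeq := fun n =>
  if h : n < u.length then u[n] else ω (n - u.length)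

/-- The finite word `u` is a prefix of the infinite word `ω`. -/
def IsPref (u : List Bool) (ω : CSeq) : Prop := ∃ ω', ω = app u ω'

/-- The finite table of branches `T` represents the permutation `g` of the
Cantor set: the domain codes and the range codes each form a complete prefix
code, and `g` maps `uω ↦ vω` for every branch `(u, v) ∈ T`. -/
def Represents (g : VPerm) (T : Finset (List Bool × List Bool)) : Prop :=
  (∀ ω : CSeq, ∃! p : List Bool × List Bool, p ∈ T ∧ IsPref p.1 ω) ∧
  (∀ ω : CSeq, ∃! p : List Bool × List Bool, p ∈ T ∧ IsPref p.2 ω) ∧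
  (∀ p ∈ T, ∀ ω : CSeq, g (app p.1 ω) = app p.2 ω)

/-- A table of branches is reduced if it contains no pair of branches
`u0 → v0`, `u1 → v1`. -/
def Reduced (T : Finset (List Bool × List Bool)) : Prop :=
  ∀ u v : List Bool,
    ¬((u ++ [false], v ++ [false]) ∈ T ∧ (u ++ [true], v ++ [true]) ∈ T)

/-- Membership in Thompson's group `V`. -/
def InV (g : VPerm) : Prop := ∃ T, Represents g T

/-- `u → v` is a branch of the (unique) reduced representation of `g`. -/
def IsBranch (g : VPerm) (u v : List Bool) : Prop :=
  ∃ T, Represents g T ∧ Reduced T ∧ (u, v) ∈ T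

/-- `N(g)`: the number of branches of the reduced representation of `g`. -/
noncomputable def Nbr (g : VPerm) : ℕ :=
  sInf {n | ∃ T, Represents g T ∧ Reduced T ∧ T.card = n}

/-- `ℓ0(g)`: the unique `ℓ ≥ 1` such that `0^ℓ` is the range code of some
branch of `g`. -/
noncomputable def ell0 (g : VPerm) : ℕ :=
  sInf {ℓ | 1 ≤ ℓ ∧ ∃ u, IsBranch g u (List.replicate ℓ false)}

/-- `ℓ1(g)`: the unique `ℓ ≥ 1` such that `1^ℓ` is the range code of some
branch of `g`. -/
noncomputable def ell1 (g : VPerm) : ℕ :=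
  sInf {ℓ | 1 ≤ ℓ ∧ ∃ u, IsBranch g u (List.replicate ℓ true)}

/-- `w` is a strict prefix of the range code of some branch of `g`. -/
def StrictPrefOfBranch (g : VPerm) (w : List Bool) : Prop :=
  ∃ u v, IsBranch g u v ∧ w <+: v ∧ w ≠ v

/-- Strict lexicographic order on infinite binary words. -/
def lexLt (a b : CSeq) : Prop :=
  ∃ n, (∀ i < n, a i = b i) ∧ a n = false ∧ b n = true

/-- Membership in Thompson's group `F`: an element of `V` preserving the
(lexicographic) order of the Cantor set. -/
def InF (g : VPerm) : Prop :=
  InV g ∧ ∀ a b : CSeq, lexLt a b → lexLt (g a) (g b)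

/-- `(a, b, c)` is a (strict) cyclically ordered triple. -/
def cyc3 (a b c : CSeq) : Prop :=
  (lexLt a b ∧ lexLt b c) ∨ (lexLt b c ∧ lexLt c a) ∨ (lexLt c a ∧ lexLt a b)

/-- Membership in Thompson's group `T`: an element of `V` preserving the
cyclic order of the Cantor set. -/
def InT (g : VPerm) : Prop :=
  InV g ∧ ∀ a b c : CSeq, cyc3 a b c → cyc3 (g a) (g b) (g c)

/-- Word length of `g` with respect to the generating set `S` (letters are
elements of `S` or inverses of elements of `S`). -/
noncomputable def wlen (S : Set VPerm) (g : VPerm) : ℕ :=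
  sInf {n | ∃ l : List VPerm,
    l.length = n ∧ (∀ x ∈ l, x ∈ S ∨ x⁻¹ ∈ S) ∧ l.prod = g}

/-- `h'` is the copy `h_{[u]}` of `h` supported on the cylinder of `u`. -/
def IsCopy (h : VPerm) (u : List Bool) (h' : VPerm) : Prop :=
  (∀ ω : CSeq, h' (app u ω) = app u (h ω)) ∧
  (∀ ω : CSeq, ¬ IsPref u ω → h' ω = ω)

/-- Evaluation (left-to-right) of the word `w` starting at the element `g`:
the paper's product `g · w`. -/
def wordEval (g : VPerm) (w : List VPerm) : VPerm :=
  w.foldl (fun a b => a.trans b) g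

/-- Branches of the generator `x0`: `00→0`, `01→10`, `1→11`. -/
def x0T : Finset (List Bool × List Bool) :=
  {([false, false], [false]), ([false, true], [true, false]),
   ([true], [true, true])}

/-- Branches of the generator `x1`: `0→0`, `100→10`, `101→110`, `11→111`. -/
def x1T : Finset (List Bool × List Bool) :=
  {([false], [false]), ([true, false, false], [true, false]),
   ([true, false, true], [true, true, false]),
   ([true, true], [true, true, true])}

/-- Branches of the generator `c1`: `0→10`, `10→11`, `11→0`. -/
def c1T : Finset (List Bool × List Bool) :=
  {([false], [true, false]), ([true, false], [true, true]),
   ([true, true], [false])}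

/-- Branches of the generator `π0`: `0→10`, `10→0`, `11→11`. -/
def pi0T : Finset (List Bool × List Bool) :=
  {([false], [true, false]), ([true, false], [false]),
   ([true, true], [true, true])}

/-- The standard generators `x_j`, `j ≥ 0`, of `F`: for `r ≥ 1`,
`x_{r+1} = x0^{-r} · x1 · x0^{r}` in the left-to-right convention of the
paper, i.e. `x0 ^ r * x1 * (x0⁻¹) ^ r` in `Equiv.Perm`. -/
def xseq (x0 x1 : VPerm) : ℕ → VPerm
  | 0 => x0
  | r + 1 => x0 ^ r * x1 * (x0⁻¹) ^ r


/-!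
Let `a → 1^ℓ` be the branch of the reduced table of `g1` whose range code consists of ones.
Every other range code has a `0` before position `m = 1 + M·N(g1)`, and `x_m` is the copy of
`x0` on the cylinder `1^m`; so `g1·x_m` agrees with `g1` off the cylinder `a`, where it acts as
the copy of `x_(m-ℓ)`, and composing with `h` turns every range code `t_(k+i)` into `u_(i+1)`.
With `w` the domain code that `h` assigns to `1^ℓ`, this gives a table of `g3` containing the
branches `a1^e0 → w1^e0` for all `e < m - ℓ`. None of them is merged in the reduced table of
`g3`: the branch `a1^(m-ℓ)00 → w1^(m-ℓ)0` lies below each of their parents and shifts word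
lengths by one more. Hence `N(g3) ≥ m - ℓ ≥ (M-1)·N(g1)`.

The lexicographically first domain code is `u_1 = 0^c`, and the branch `u_1 → t_k` becomes
`0^c → 0^c` (or `0^(c+1) → 0^(c+1)` if it was the all-ones branch), which the reduced table of
`g3` can only shorten to some `0^b → 0^b` with `b ≥ 1`. Finally `h` maps every range cylinder of
`g1` onto a cylinder, so it has a table with `N(g1)` branches, which gives (1).
-/

section Words

lemma app_apply_lt (u : List Bool) (ω : CSeq) {n : ℕ} (h : n < u.length) :
    app u ω n = u[n] := dif_pos h

lemma app_apply_ge (u : List Bool) (ω : CSeq) {n : ℕ} (h : u.length ≤ n) :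
    app u ω n = ω (n - u.length) := dif_neg (by omega)

lemma app_nil (ω : CSeq) : app [] ω = ω := by
  funext n
  simp [app]

lemma app_append (u v : List Bool) (ω : CSeq) : app (u ++ v) ω = app u (app v ω) := by
  funext n
  have hl : (u ++ v).length = u.length + v.length := List.length_append
  by_cases h1 : n < u.length
  · rw [app_apply_lt (u ++ v) ω (by omega), app_apply_lt u _ h1, List.getElem_append_left h1]
  rw [app_apply_ge u _ (by omega)]
  by_cases h2 : n < u.length + v.length
  · rw [app_apply_lt (u ++ v) ω (by omega), app_apply_lt v ω (by omega),
      List.getElem_append_right (by omega)]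
  · rw [app_apply_ge (u ++ v) ω (by omega), app_apply_ge v ω (by omega), hl, Nat.sub_add_eq]

lemma app_cons (b : Bool) (u : List Bool) (ω : CSeq) : app (b :: u) ω = app [b] (app u ω) :=
  app_append [b] u ω

lemma app_injective (u : List Bool) : Function.Injective (app u) := by
  intro ω ω' h
  funext n
  simpa [app_apply_ge _ _ (Nat.le_add_left u.length n)] using congrFun h (n + u.length)

lemma exists_eq_app_singleton (ω : CSeq) : ∃ b τ, ω = app [b] τ := by
  refine ⟨ω 0, fun n => ω (n + 1), funext fun n => ?_⟩
  cases n <;> simp [app]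

lemma eq_of_forall_app_eq {u v : List Bool} (h : ∀ ω, app u ω = app v ω) : u = v := by
  have length_le : ∀ {u v : List Bool}, (∀ ω, app u ω = app v ω) → u.length ≤ v.length := by
    intro u v h
    by_contra! hlt
    have h0 := congrFun (h fun _ => false) v.length
    have h1 := congrFun (h fun _ => true) v.length
    rw [app_apply_lt _ _ hlt, app_apply_ge _ _ le_rfl] at h0 h1
    exact Bool.false_ne_true (h0.symm.trans h1)
  apply List.ext_getElem (le_antisymm (length_le h) (length_le fun ω => (h ω).symm))
  intro i h1 h2
  simpa [app_apply_lt _ _ h1, app_apply_lt _ _ h2] using congrFun (h fun _ => false) i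

lemma isPref_iff {u : List Bool} {ω : CSeq} :
    IsPref u ω ↔ ∀ i (h : i < u.length), ω i = u[i] := by
  constructor
  · rintro ⟨ω', rfl⟩ i h
    exact app_apply_lt _ _ h
  · intro h
    refine ⟨fun n => ω (n + u.length), funext fun n => ?_⟩
    by_cases hn : n < u.length
    · rw [app_apply_lt _ _ hn, h n hn]
    · rw [app_apply_ge _ _ (by omega), Nat.sub_add_cancel (by omega)]

lemma isPref_app (u : List Bool) (ω : CSeq) : IsPref u (app u ω) := ⟨ω, rfl⟩

lemma IsPref.of_prefix {u v : List Bool} {ω : CSeq} (h : u <+: v) (hv : IsPref v ω) :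
    IsPref u ω := by
  obtain ⟨s, rfl⟩ := h
  obtain ⟨ω', rfl⟩ := hv
  exact ⟨app s ω', app_append u s ω'⟩

lemma isPref_append_app_iff {u s : List Bool} {τ : CSeq} :
    IsPref (u ++ s) (app u τ) ↔ IsPref s τ := by
  constructor
  · rintro ⟨ω', h⟩
    exact ⟨ω', app_injective u (h.trans (app_append u s ω'))⟩
  · rintro ⟨ω', rfl⟩
    exact ⟨ω', (app_append u s ω').symm⟩

lemma IsPref.exists_snoc {u : List Bool} {ω : CSeq} (h : IsPref u ω) :
    ∃ b, IsPref (u ++ [b]) ω := by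
  obtain ⟨τ, rfl⟩ := h
  obtain ⟨b, τ, rfl⟩ := exists_eq_app_singleton τ
  exact ⟨b, τ, (app_append u [b] τ).symm⟩

lemma IsPref.prefix_of_length_le {u v : List Bool} {ω : CSeq} (hu : IsPref u ω)
    (hv : IsPref v ω) (hl : u.length ≤ v.length) : u <+: v := by
  rw [isPref_iff] at hu hv
  rw [List.prefix_iff_eq_take]
  apply List.ext_getElem (by simp [hl])
  intro i h1 h2
  rw [List.getElem_take, ← hu i h1, hv i (by omega)]

lemma isPref_replicate_self (j : ℕ) (b : Bool) : IsPref (List.replicate j b) fun _ => b :=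
  isPref_iff.mpr fun _ _ => by simp

lemma IsPref.eq_replicate {u : List Bool} {b : Bool} (h : IsPref u fun _ => b) :
    u = List.replicate u.length b := by
  rw [isPref_iff] at h
  refine List.eq_replicate_iff.mpr ⟨rfl, fun x hx => ?_⟩
  obtain ⟨i, hi, rfl⟩ := List.getElem_of_mem hx
  exact (h i hi).symm

lemma exists_eq_replicate_true_append {v : List Bool} (h : false ∈ v) :
    ∃ e r, v = List.replicate e true ++ false :: r := by
  induction v with
  | nil => simp at h
  | cons b v ih =>
    cases b
    · exact ⟨0, v, rfl⟩
    · obtain ⟨e, r, rfl⟩ := ih (by simpa using h)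
      exact ⟨e + 1, r, rfl⟩

lemma List.Lex.prefix_replicate_false {a : ℕ} {y : List Bool}
    (h : List.Lex (· < ·) y (List.replicate a false)) : y <+: List.replicate a false := by
  induction a generalizing y with
  | zero => cases h
  | succ a ih =>
    rw [List.replicate_succ] at h ⊢
    cases h with
    | nil => exact List.nil_prefix
    | cons h => exact List.cons_prefix_cons.mpr ⟨rfl, ih h⟩
    | rel h => exact absurd h (by simp)

end Words

/-- Indexing the words by `T`, rather than taking a set of words, lets `c = Prod.fst` and
`c = Prod.snd` express the two code conditions of `Represents`. -/
def IsCompleteCode {α : Type*} (T : Finset α) (c : α → List Bool) : Prop :=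
  ∀ ω : CSeq, ∃! p, p ∈ T ∧ IsPref (c p) ω

namespace IsCompleteCode

variable {α β : Type*} {T : Finset α} {c : α → List Bool} {p q : α}

lemma eq_of_isPref (hT : IsCompleteCode T c) (hp : p ∈ T) (hq : q ∈ T) {ω : CSeq}
    (hpω : IsPref (c p) ω) (hqω : IsPref (c q) ω) : p = q :=
  (hT ω).unique ⟨hp, hpω⟩ ⟨hq, hqω⟩

lemma eq_of_prefix (hT : IsCompleteCode T c) (hp : p ∈ T) (hq : q ∈ T) (h : c p <+: c q) :
    p = q :=
  hT.eq_of_isPref hp hq ((isPref_app _ fun _ => false).of_prefix h) (isPref_app _ _)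

lemma ne_nil_of_one_lt_card (hT : IsCompleteCode T c) (hcard : 1 < T.card) (hp : p ∈ T) :
    c p ≠ [] := by
  intro hnil
  obtain ⟨q, hq, hne⟩ := Finset.exists_mem_ne hcard p
  exact hne (hT.eq_of_prefix hp hq (hnil ▸ List.nil_prefix)).symm

lemma false_mem (hT : IsCompleteCode T c) (hp : p ∈ T) {ℓ : ℕ}
    (hpℓ : c p = List.replicate ℓ true) (hq : q ∈ T) (hne : q ≠ p) : false ∈ c q := by
  by_contra hf
  have hq1 : c q = List.replicate (c q).length true :=
    List.eq_replicate_iff.mpr ⟨rfl, fun b hb => by cases b <;> simp_all⟩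
  refine hne (hT.eq_of_isPref hq hp (ω := fun _ => true) ?_ ?_)
  · rw [hq1]; exact isPref_replicate_self _ _
  · rw [hpℓ]; exact isPref_replicate_self _ _

lemma image [DecidableEq α] {T : Finset β} {r : β → α}
    (hT : IsCompleteCode T fun b => c (r b)) : IsCompleteCode (T.image r) c := by
  intro ω
  obtain ⟨p, ⟨hp, hpω⟩, -⟩ := hT ω
  refine ⟨r p, ⟨Finset.mem_image_of_mem r hp, hpω⟩, ?_⟩
  rintro _ ⟨hx, hxω⟩
  obtain ⟨q, hq, rfl⟩ := Finset.mem_image.mp hx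
  rw [hT.eq_of_isPref hq hp hxω hpω]

lemma splice [DecidableEq α] (hT : IsCompleteCode T c) (hp : p ∈ T) {S : Finset β}
    {c' : β → List Bool} (hS : IsCompleteCode S c') (e : β → α)
    (he : ∀ s, c (e s) = c p ++ c' s) : IsCompleteCode (T.erase p ∪ S.image e) c := by
  intro ω
  obtain ⟨t, ⟨ht, htω⟩, ht_unique⟩ := hT ω
  by_cases htp : t = p
  · subst htp
    obtain ⟨τ, rfl⟩ := htω
    obtain ⟨s, ⟨hs, hsτ⟩, hs_unique⟩ := hS τ
    refine ⟨e s, ⟨Finset.mem_union_right _ (Finset.mem_image_of_mem e hs), ?_⟩, ?_⟩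
    · rw [he]; exact isPref_append_app_iff.mpr hsτ
    rintro x ⟨hx, hxω⟩
    rcases Finset.mem_union.mp hx with hx | hx
    · obtain ⟨hxt, hxT⟩ := Finset.mem_erase.mp hx
      exact absurd (ht_unique x ⟨hxT, hxω⟩) hxt
    · obtain ⟨s', hs', rfl⟩ := Finset.mem_image.mp hx
      rw [he] at hxω
      rw [hs_unique s' ⟨hs', isPref_append_app_iff.mp hxω⟩]
  · refine ⟨t, ⟨Finset.mem_union_left _ (Finset.mem_erase.mpr ⟨htp, ht⟩), htω⟩, ?_⟩
    rintro x ⟨hx, hxω⟩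
    rcases Finset.mem_union.mp hx with hx | hx
    · exact ht_unique x ⟨(Finset.mem_erase.mp hx).2, hxω⟩
    · obtain ⟨s, -, rfl⟩ := Finset.mem_image.mp hx
      rw [he] at hxω
      exact absurd (ht_unique p ⟨hp, hxω.of_prefix (List.prefix_append _ _)⟩).symm htp

lemma merge [DecidableEq α] (hT : IsCompleteCode T c) {p₀ p₁ x : α} {r : List Bool}
    (h₀ : p₀ ∈ T) (h₁ : p₁ ∈ T) (hc₀ : c p₀ = r ++ [false]) (hc₁ : c p₁ = r ++ [true])
    (hx : c x = r) : IsCompleteCode (insert x ((T.erase p₀).erase p₁)) c := by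
  intro ω
  by_cases hr : IsPref r ω
  · obtain ⟨b, hb⟩ := hr.exists_snoc
    refine ⟨x, ⟨Finset.mem_insert_self _ _, hx ▸ hr⟩, ?_⟩
    rintro y ⟨hy, hyω⟩
    rcases Finset.mem_insert.mp hy with rfl | hy
    · rfl
    obtain ⟨hy₁, hy₀, hyT⟩ : y ≠ p₁ ∧ y ≠ p₀ ∧ y ∈ T := by simpa using hy
    cases b
    · exact absurd (hT.eq_of_isPref hyT h₀ hyω (hc₀ ▸ hb)) hy₀
    · exact absurd (hT.eq_of_isPref hyT h₁ hyω (hc₁ ▸ hb)) hy₁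
  · obtain ⟨t, ⟨ht, htω⟩, ht_unique⟩ := hT ω
    have hne : ∀ {p b}, c p = r ++ [b] → t ≠ p := by
      rintro p b hpb rfl
      exact hr (htω.of_prefix (hpb ▸ List.prefix_append r [b]))
    refine ⟨t, ⟨Finset.mem_insert_of_mem ?_, htω⟩, ?_⟩
    · simpa [ht] using ⟨hne hc₁, hne hc₀⟩
    rintro y ⟨hy, hyω⟩
    rcases Finset.mem_insert.mp hy with rfl | hy
    · exact absurd (hx ▸ hyω) hr
    · exact ht_unique y ⟨(Finset.mem_erase.mp (Finset.mem_erase.mp hy).2).2, hyω⟩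

/-- A longest word has its sibling in the code. -/
lemma exists_sibling (hT : IsCompleteCode T c) (hne : ∀ p ∈ T, c p ≠ []) :
    ∃ p ∈ T, ∃ q ∈ T, ∃ r, c p = r ++ [false] ∧ c q = r ++ [true] := by
  obtain ⟨p₀, ⟨hp₀, -⟩, -⟩ := hT fun _ => false
  obtain ⟨p, hp, hmax⟩ := T.exists_max_image (fun p => (c p).length) ⟨p₀, hp₀⟩
  obtain ⟨r, b, hrb⟩ : ∃ r b, c p = r ++ [b] :=
    ⟨_, _, (List.dropLast_append_getLast (hne p hp)).symm⟩
  obtain ⟨q, ⟨hq, hqω⟩, -⟩ := hT (app (r ++ [!b]) fun _ => false)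
  have hqr : c q <+: r ++ [!b] :=
    hqω.prefix_of_length_le (isPref_app _ _) (by simpa [hrb] using hmax q hq)
  rcases List.prefix_concat_iff.mp hqr with hqr | hqr
  · cases b
    · exact ⟨p, hp, q, hq, r, hrb, hqr⟩
    · exact ⟨q, hq, p, hp, r, hqr, hrb⟩
  · have hqp := hT.eq_of_prefix hq hp (hqr.trans (hrb ▸ List.prefix_append r [b]))
    subst hqp
    simpa [hrb] using hqr.length_le

lemma length_lt_card (hT : IsCompleteCode T c) (hp : p ∈ T) : (c p).length < T.card := by
  obtain ⟨w, hw⟩ : ∃ w, c p = w := ⟨_, rfl⟩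
  -- `ω i` agrees with `w` before position `i` and differs from it at `i`, so the codewords
  -- of the `ω i`, `i ≤ |w|`, are pairwise distinct
  let ω : ℕ → CSeq := fun i n =>
    if n < i then w.getD n false else if n = i then !w.getD n false else false
  choose F hFT hFω using fun i => (hT (ω i)).exists
  have hwω : IsPref w (ω w.length) :=
    isPref_iff.mpr fun i hi => by simp [ω, hi]
  have hinj : ∀ i j, i < j → j ≤ w.length → F i ≠ F j := by
    intro i j hij hj hF
    have hi := hFω i
    rw [hF] at hi
    have hlen : (c (F j)).length ≤ i := by
      by_contra! hlt
      have e₁ := isPref_iff.mp hi i hlt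
      have e₂ := isPref_iff.mp (hFω j) i hlt
      simp [ω, hij] at e₁ e₂
      simp [e₂] at e₁
    have hpref : IsPref (c (F j)) (ω w.length) := isPref_iff.mpr fun n hn => by
      have := isPref_iff.mp hi n hn
      simp only [ω, show n < i by omega, show n < w.length by omega, if_true] at this ⊢
      exact this
    rw [hT.eq_of_isPref (hFT j) hp hpref (hw ▸ hwω), hw] at hlen
    omega
  have := Finset.card_le_card_of_injOn F (s := Finset.range (w.length + 1))
    (fun i _ => hFT i) fun i hi j hj hij => by
      simp only [Finset.coe_range, Set.mem_Iio] at hi hj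
      by_contra hne
      rcases Nat.lt_or_gt_of_ne hne with h | h
      exacts [hinj i j h (by omega) hij, hinj j i h (by omega) hij.symm]
  simpa [hw] using this

end IsCompleteCode

namespace Represents

variable {g : VPerm} {T T' : Finset (List Bool × List Bool)} {p q : List Bool × List Bool}

lemma dom (hT : Represents g T) : IsCompleteCode T Prod.fst := hT.1

lemma rng (hT : Represents g T) : IsCompleteCode T Prod.snd := hT.2.1

lemma snd_eq_append (hT : Represents g T) (hT' : Represents g T') (hp : p ∈ T) (hq : q ∈ T')
    {s : List Bool} (hs : q.1 = p.1 ++ s) : q.2 = p.2 ++ s :=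
  eq_of_forall_app_eq fun ω => by
    rw [← hT'.2.2 q hq, hs, app_append, hT.2.2 p hp, app_append]

lemma exists_refines (hT : Represents g T) (hred : Reduced T) (hT' : Represents g T')
    (hq : q ∈ T') : ∃ p ∈ T, ∃ s, q.1 = p.1 ++ s ∧ q.2 = p.2 ++ s := by
  by_cases hshort : ∃ p ∈ T, ∃ s, q.1 = p.1 ++ s
  · obtain ⟨p, hp, s, hs⟩ := hshort
    exact ⟨p, hp, s, hs, hT.snd_eq_append hT' hp hq hs⟩
  push Not at hshort
  -- otherwise the branches of `T` below `q.1` form a complete code after the prefix `q.1`,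
  -- and two sibling branches among them contradict reducedness
  let S := T.filter fun p => q.1 <+: p.1
  have hS : IsCompleteCode S fun p => p.1.drop q.1.length := by
    intro τ
    obtain ⟨p, ⟨hp, hpτ⟩, hp_unique⟩ := hT.1 (app q.1 τ)
    obtain ⟨s, hs⟩ : q.1 <+: p.1 := by
      rcases le_total p.1.length q.1.length with hl | hl
      · obtain ⟨s, hs⟩ := hpτ.prefix_of_length_le (isPref_app _ _) hl
        exact absurd hs.symm (hshort p hp s)
      · exact (isPref_app _ _).prefix_of_length_le hpτ hl
    refine ⟨p, ⟨Finset.mem_filter.mpr ⟨hp, s, hs⟩, ?_⟩, ?_⟩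
    · show IsPref (p.1.drop q.1.length) τ
      rw [← hs] at hpτ ⊢
      simpa using isPref_append_app_iff.mp hpτ
    rintro x ⟨hx, hxτ⟩
    obtain ⟨hxT, s', hs'⟩ := Finset.mem_filter.mp hx
    simp only [← hs', List.drop_left] at hxτ
    exact hp_unique x ⟨hxT, hs' ▸ isPref_append_app_iff.mpr hxτ⟩
  have hS_ne : ∀ p ∈ S, p.1.drop q.1.length ≠ [] := by
    intro p hp hnil
    obtain ⟨hpT, s, hs⟩ := Finset.mem_filter.mp hp
    rw [← hs, List.drop_left] at hnil
    exact hshort p hpT [] (by simp [← hs, hnil])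
  have hsnd : ∀ p ∈ S, ∀ r, p.1.drop q.1.length = r → p = (q.1 ++ r, q.2 ++ r) := by
    intro p hp r hr
    obtain ⟨hpT, s, hs⟩ := Finset.mem_filter.mp hp
    rw [← hs, List.drop_left] at hr
    subst hr
    exact Prod.ext hs.symm (hT'.snd_eq_append hT hq hpT hs.symm)
  obtain ⟨p₀, hp₀, p₁, hp₁, r, h₀, h₁⟩ := hS.exists_sibling hS_ne
  exfalso
  refine hred (q.1 ++ r) (q.2 ++ r) ⟨?_, ?_⟩
  · simpa [hsnd p₀ hp₀ _ h₀] using (Finset.mem_filter.mp hp₀).1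
  · simpa [hsnd p₁ hp₁ _ h₁] using (Finset.mem_filter.mp hp₁).1

lemma subset_of_reduced (hT : Represents g T) (hred : Reduced T) (hT' : Represents g T')
    (hred' : Reduced T') : T' ⊆ T := by
  intro q hq
  obtain ⟨p, hp, s, h₁, h₂⟩ := hT.exists_refines hred hT' hq
  obtain ⟨q', hq', s', h₁', -⟩ := hT'.exists_refines hred' hT hp
  have hqq' : q' = q := hT'.dom.eq_of_prefix hq' hq ⟨s' ++ s, by rw [h₁, h₁', List.append_assoc]⟩
  have hs : s = [] := by
    have := congrArg List.length h₁
    rw [h₁', hqq'] at this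
    exact (by simpa using this : s' = [] ∧ s = []).2
  rw [show q = p from Prod.ext (by simpa [hs] using h₁) (by simpa [hs] using h₂)]
  exact hp

lemma eq_of_reduced (hT : Represents g T) (hred : Reduced T) (hT' : Represents g T')
    (hred' : Reduced T') : T = T' :=
  (hT'.subset_of_reduced hred' hT hred).antisymm (hT.subset_of_reduced hred hT' hred')

lemma exists_reduced (hT : Represents g T) :
    ∃ T', Represents g T' ∧ Reduced T' ∧ T'.card ≤ T.card := by
  generalize hN : T.card = N at *
  induction N using Nat.strong_induction_on generalizing T with
  | _ N ih =>
  by_cases hr : Reduced T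
  · exact ⟨T, hT, hr, hN.le⟩
  simp only [Reduced, not_forall, not_not] at hr
  obtain ⟨u, v, h₀, h₁⟩ := hr
  have hmerge : Represents g (insert (u, v)
      ((T.erase (u ++ [false], v ++ [false])).erase (u ++ [true], v ++ [true]))) := by
    refine ⟨hT.dom.merge h₀ h₁ rfl rfl rfl, hT.rng.merge h₀ h₁ rfl rfl rfl, ?_⟩
    intro p hp ω
    rcases Finset.mem_insert.mp hp with rfl | hp
    · obtain ⟨b, τ, rfl⟩ := exists_eq_app_singleton ω
      rw [← app_append, ← app_append]
      cases b
      exacts [hT.2.2 _ h₀ τ, hT.2.2 _ h₁ τ]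
    · exact hT.2.2 p (Finset.mem_of_mem_erase (Finset.mem_of_mem_erase hp)) ω
  have hlt : (insert (u, v) ((T.erase (u ++ [false], v ++ [false])).erase
      (u ++ [true], v ++ [true]))).card < N := by
    have hne : (u ++ [true], v ++ [true]) ≠ (u ++ [false], v ++ [false]) := by simp
    have h₁' := Finset.mem_erase.mpr ⟨hne, h₁⟩
    have h2 : 1 < T.card := Finset.one_lt_card.mpr ⟨_, h₀, _, h₁, hne.symm⟩
    have := Finset.card_insert_le (u, v) ((T.erase (u ++ [false], v ++ [false])).erase
      (u ++ [true], v ++ [true]))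
    rw [Finset.card_erase_of_mem h₁', Finset.card_erase_of_mem h₀, hN] at this
    omega
  obtain ⟨T', hT', hred', hcard'⟩ := ih _ hlt hmerge rfl
  exact ⟨T', hT', hred', by omega⟩

lemma Nbr_le_card (hT : Represents g T) : Nbr g ≤ T.card := by
  obtain ⟨T', hT', hred', hcard⟩ := hT.exists_reduced
  have : T'.card ∈ {n | ∃ T, Represents g T ∧ Reduced T ∧ T.card = n} := ⟨T', hT', hred', rfl⟩
  exact (Nat.sInf_le this).trans hcard

lemma exists_reduced_card_eq_Nbr (hT : Represents g T) :
    ∃ T', Represents g T' ∧ Reduced T' ∧ T'.card = Nbr g := by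
  obtain ⟨T', hT', hred', -⟩ := hT.exists_reduced
  exact Nat.sInf_mem (s := {n | ∃ T, Represents g T ∧ Reduced T ∧ T.card = n})
    ⟨_, T', hT', hred', rfl⟩

end Represents

lemma IsBranch.mem {g : VPerm} {T : Finset (List Bool × List Bool)} {u v : List Bool}
    (hb : IsBranch g u v) (hT : Represents g T) (hred : Reduced T) : (u, v) ∈ T := by
  obtain ⟨T', hT', hred', huv⟩ := hb
  rwa [hT.eq_of_reduced hred hT' hred']

def splice (T : Finset (List Bool × List Bool)) (p : List Bool × List Bool)
    (S : Finset (List Bool × List Bool)) : Finset (List Bool × List Bool) :=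
  T.erase p ∪ S.image fun q => (p.1 ++ q.1, p.2 ++ q.2)

lemma mem_splice_of_mem_of_ne {T S : Finset (List Bool × List Bool)}
    {p q : List Bool × List Bool} (hq : q ∈ T) (hqp : q ≠ p) : q ∈ splice T p S :=
  Finset.mem_union_left _ (Finset.mem_erase.mpr ⟨hqp, hq⟩)

lemma append_mem_splice {T S : Finset (List Bool × List Bool)}
    {p q : List Bool × List Bool} (hq : q ∈ S) : (p.1 ++ q.1, p.2 ++ q.2) ∈ splice T p S :=
  Finset.mem_union_right _ (Finset.mem_image_of_mem _ hq)

namespace Represents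

variable {g f : VPerm} {T S : Finset (List Bool × List Bool)} {p q : List Bool × List Bool}

lemma splice (hT : Represents g T) (hp : p ∈ T) (hS : Represents f S) {g' : VPerm}
    (hg'T : ∀ q ∈ T, q ≠ p → ∀ ω, g' (app q.1 ω) = app q.2 ω)
    (hg'p : ∀ ω, g' (app p.1 ω) = app p.2 (f ω)) : Represents g' (splice T p S) := by
  refine ⟨hT.dom.splice hp hS.dom _ fun _ => rfl, hT.rng.splice hp hS.rng _ fun _ => rfl, ?_⟩
  intro q hq ω
  rcases Finset.mem_union.mp hq with hq | hq
  · obtain ⟨hqp, hqT⟩ := Finset.mem_erase.mp hq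
    exact hg'T q hqT hqp ω
  · obtain ⟨s, hs, rfl⟩ := Finset.mem_image.mp hq
    rw [app_append, hg'p, hS.2.2 s hs, app_append]

lemma trans (hT : Represents g T) {ψ : List Bool → List Bool}
    (hf : ∀ p ∈ T, ∀ ω, f (app p.2 ω) = app (ψ p.2) ω) :
    Represents (g.trans f) (T.image fun p => (p.1, ψ p.2)) := by
  refine ⟨IsCompleteCode.image hT.dom, fun ω => ?_, ?_⟩
  · obtain ⟨p, ⟨hp, τ, hτ⟩, -⟩ := hT.2.1 (f.symm ω)
    have hω : ω = app (ψ p.2) τ := by rw [← hf p hp, ← hτ, Equiv.apply_symm_apply]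
    refine ⟨(p.1, ψ p.2), ⟨Finset.mem_image_of_mem _ hp, τ, hω⟩, ?_⟩
    rintro _ ⟨hx, τ', hτ'⟩
    obtain ⟨q, hq, rfl⟩ := Finset.mem_image.mp hx
    have hqω : IsPref q.2 (f.symm ω) :=
      ⟨τ', by rw [hτ', ← hf q hq, Equiv.symm_apply_apply]⟩
    rw [hT.rng.eq_of_isPref hq hp hqω ⟨τ, hτ⟩]
  · intro x hx ω
    obtain ⟨q, hq, rfl⟩ := Finset.mem_image.mp hx
    rw [Equiv.trans_apply, hT.2.2 q hq, hf q hq]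

lemma Nbr_le_card_of_apply_app (hT : Represents g T) {ψ : List Bool → List Bool}
    (hf : ∀ p ∈ T, ∀ ω, f (app p.2 ω) = app (ψ p.2) ω) : Nbr f ≤ T.card := by
  have hId : Represents (Equiv.refl CSeq) (T.image fun p => (p.2, p.2)) := by
    refine ⟨IsCompleteCode.image hT.rng, IsCompleteCode.image hT.rng, fun x hx ω => ?_⟩
    obtain ⟨p, -, rfl⟩ := Finset.mem_image.mp hx
    rfl
  have hf' : ∀ p ∈ T.image (fun p => (p.2, p.2)), ∀ ω, f (app p.2 ω) = app (ψ p.2) ω := by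
    simp only [Finset.mem_image]
    rintro _ ⟨p, hp, rfl⟩
    exact hf p hp
  have := (hId.trans hf').Nbr_le_card
  rw [Equiv.refl_trans] at this
  exact this.trans (Finset.card_image_le.trans Finset.card_image_le)

/-- A strictly shorter ancestor of `p` in `Tr` would also be an ancestor of `q`, and all
branches refining one branch shift word lengths equally. -/
lemma mem_of_shift_ne {Tr : Finset (List Bool × List Bool)} (hT : Represents g T)
    (hTr : Represents g Tr) (hred : Reduced Tr) (hp : p ∈ T) (hq : q ∈ T)
    (hpq : p.1.dropLast <+: q.1)
    (hshift : p.1.length + q.2.length ≠ q.1.length + p.2.length) : p ∈ Tr := by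
  obtain ⟨r, hr, s, h₁, h₂⟩ := hTr.exists_refines hred hT hp
  by_cases hs : s = []
  · rwa [show p = r from Prod.ext (by simpa [hs] using h₁) (by simpa [hs] using h₂)]
  have hrq : r.1 <+: q.1 := by
    refine (List.prefix_of_prefix_length_le ⟨s, h₁.symm⟩ (List.dropLast_prefix _) ?_).trans hpq
    have := List.length_pos_iff.mpr hs
    simp [h₁]
    omega
  obtain ⟨s', hs'⟩ := hrq
  have h₂' := hTr.snd_eq_append hT hr hq hs'.symm
  refine absurd ?_ hshift
  rw [h₁, h₂, ← hs', h₂']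
  simp only [List.length_append]
  omega

lemma exists_replicate_false_mem {Tr : Finset (List Bool × List Bool)} (hT : Represents g T)
    (hTr : Represents g Tr) (hred : Reduced Tr) (hcard : 1 < Tr.card) {b : ℕ}
    (hb : (List.replicate b false, List.replicate b false) ∈ T) :
    ∃ a, 1 ≤ a ∧ a ≤ b ∧ (List.replicate a false, List.replicate a false) ∈ Tr := by
  obtain ⟨r, hr, s, h₁, h₂⟩ := hTr.exists_refines hred hT hb
  have hr' : r = (r.1, r.1) := Prod.ext rfl (List.append_cancel_right (h₁.symm.trans h₂)).symm
  obtain ⟨hlen, hrep⟩ := List.prefix_replicate_iff.mp (⟨s, h₁.symm⟩ : r.1 <+: _)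
  refine ⟨r.1.length, List.length_pos_iff.mpr (hTr.dom.ne_nil_of_one_lt_card hcard hr), hlen, ?_⟩
  rwa [← hrep, ← hr']

end Represents

lemma ell0_eq_of_mem {g : VPerm} {T : Finset (List Bool × List Bool)} (hT : Represents g T)
    (hred : Reduced T) {b : ℕ} (hb : 1 ≤ b) {u : List Bool}
    (hu : (u, List.replicate b false) ∈ T) : ell0 g = b := by
  have hmem : b ∈ {ℓ | 1 ≤ ℓ ∧ ∃ u, IsBranch g u (List.replicate ℓ false)} :=
    ⟨hb, u, T, hT, hred, hu⟩
  obtain ⟨-, u', hu'⟩ := Nat.sInf_mem ⟨b, hmem⟩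
  have := hT.rng.eq_of_isPref (hu'.mem hT hred) hu (isPref_replicate_self _ false)
    (isPref_replicate_self _ false)
  simpa [ell0] using congrArg (fun p => p.2.length) this

lemma Represents.inv_apply_app {g : VPerm} {T : Finset (List Bool × List Bool)}
    (hT : Represents g T) {p : List Bool × List Bool} (hp : p ∈ T) (ω : CSeq) :
    g⁻¹ (app p.2 ω) = app p.1 ω :=
  Equiv.Perm.inv_eq_iff_eq.mpr (hT.2.2 p hp ω).symm

section Xseq

variable {x0 x1 : VPerm}

lemma xseq_one (x0 x1 : VPerm) : xseq x0 x1 1 = x1 := by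
  simp [xseq]

lemma xseq_succ_succ (x0 x1 : VPerm) (d : ℕ) :
    xseq x0 x1 (d + 1 + 1) = x0 * xseq x0 x1 (d + 1) * x0⁻¹ := by
  simp only [xseq]
  rw [pow_succ', pow_succ]
  group

lemma x1_apply_true (hx0 : Represents x0 x0T) (hx1 : Represents x1 x1T) (ω : CSeq) :
    x1 (app [true] ω) = app [true] (x0 ω) := by
  obtain ⟨a, ω, rfl⟩ := exists_eq_app_singleton ω
  cases a
  · obtain ⟨b, τ, rfl⟩ := exists_eq_app_singleton ω
    simp only [← app_append, List.singleton_append]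
    cases b
    · rw [hx0.2.2 ([false, false], [false]) (by simp [x0T]),
        hx1.2.2 ([true, false, false], [true, false]) (by simp [x1T])]
      exact app_cons _ _ _
    · rw [hx0.2.2 ([false, true], [true, false]) (by simp [x0T]),
        hx1.2.2 ([true, false, true], [true, true, false]) (by simp [x1T])]
      exact app_cons _ _ _
  · simp only [← app_append, List.singleton_append]
    rw [hx0.2.2 ([true], [true, true]) (by simp [x0T]),
      hx1.2.2 ([true, true], [true, true, true]) (by simp [x1T])]
    exact app_cons _ _ _

lemma xseq_succ_apply_false (hx0 : Represents x0 x0T) (hx1 : Represents x1 x1T) (d : ℕ)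
    (ω : CSeq) : xseq x0 x1 (d + 1) (app [false] ω) = app [false] ω := by
  induction d generalizing ω with
  | zero => exact xseq_one x0 x1 ▸ hx1.2.2 ([false], [false]) (by simp [x1T]) ω
  | succ d ih =>
    rw [xseq_succ_succ, Equiv.Perm.mul_apply, Equiv.Perm.mul_apply,
      hx0.inv_apply_app (p := ([false, false], [false])) (by simp [x0T]), app_cons, ih,
      ← app_cons]
    exact hx0.2.2 ([false, false], [false]) (by simp [x0T]) ω

lemma xseq_succ_apply_true (hx0 : Represents x0 x0T) (hx1 : Represents x1 x1T) (d : ℕ)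
    (ω : CSeq) : xseq x0 x1 (d + 1) (app [true] ω) = app [true] (xseq x0 x1 d ω) := by
  induction d generalizing ω with
  | zero => rw [xseq_one]; exact x1_apply_true hx0 hx1 ω
  | succ d ih =>
    obtain ⟨b, τ, rfl⟩ := exists_eq_app_singleton ω
    rw [xseq_succ_succ, Equiv.Perm.mul_apply, Equiv.Perm.mul_apply, ← app_cons]
    cases b
    · rw [hx0.inv_apply_app (p := ([false, true], [true, false])) (by simp [x0T]), app_cons,
        xseq_succ_apply_false hx0 hx1, ← app_cons,
        hx0.2.2 ([false, true], [true, false]) (by simp [x0T]),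
        xseq_succ_apply_false hx0 hx1, app_cons]
    · rw [hx0.inv_apply_app (p := ([true], [true, true])) (by simp [x0T]), ih,
        hx0.2.2 ([true], [true, true]) (by simp [x0T]), app_cons]

lemma xseq_apply_replicate_true (hx0 : Represents x0 x0T) (hx1 : Represents x1 x1T)
    {ℓ m : ℕ} (h : ℓ ≤ m) (ω : CSeq) :
    xseq x0 x1 m (app (List.replicate ℓ true) ω) =
      app (List.replicate ℓ true) (xseq x0 x1 (m - ℓ) ω) := by
  induction ℓ generalizing m with
  | zero => simp [app_nil]
  | succ ℓ ih =>
    obtain ⟨m, rfl⟩ : ∃ m', m = m' + 1 := ⟨m - 1, by omega⟩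
    rw [List.replicate_succ, app_cons true _ ω, xseq_succ_apply_true hx0 hx1, ih (by omega),
      app_cons true _ (xseq x0 x1 _ ω), Nat.add_sub_add_right]

lemma xseq_apply_of_false_mem (hx0 : Represents x0 x0T) (hx1 : Represents x1 x1T)
    {m : ℕ} {v : List Bool} (hv : false ∈ v) (hlen : v.length ≤ m) (ω : CSeq) :
    xseq x0 x1 m (app v ω) = app v ω := by
  obtain ⟨e, r, rfl⟩ := exists_eq_replicate_true_append hv
  have he : e + 1 ≤ m := by simp at hlen; omega
  rw [app_append, app_cons, xseq_apply_replicate_true hx0 hx1 (by omega),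
    show m - e = m - e - 1 + 1 by omega, xseq_succ_apply_false hx0 hx1]

def caretTable : Finset (List Bool × List Bool) :=
  {([false], [false]), ([true], [true])}

lemma isCompleteCode_caretTable {c : List Bool × List Bool → List Bool}
    (hc : ∀ b, c ([b], [b]) = [b]) : IsCompleteCode caretTable c := by
  intro ω
  obtain ⟨b, τ, rfl⟩ := exists_eq_app_singleton ω
  have hfirst : ∀ {b'}, IsPref [b'] (app [b] τ) → b' = b := by
    rintro b' ⟨τ', h⟩
    simpa [app] using (congrFun h 0).symm
  refine ⟨([b], [b]), ⟨by cases b <;> simp [caretTable], (hc b).symm ▸ isPref_app _ _⟩, ?_⟩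
  rintro q ⟨hq, hqω⟩
  simp only [caretTable, Finset.mem_insert, Finset.mem_singleton] at hq
  rcases hq with rfl | rfl <;> rw [hc] at hqω <;> rw [hfirst hqω]

lemma represents_caretTable : Represents (Equiv.refl CSeq) caretTable :=
  ⟨isCompleteCode_caretTable fun _ => rfl, isCompleteCode_caretTable fun _ => rfl,
    fun p hp _ => by
      simp only [caretTable, Finset.mem_insert, Finset.mem_singleton] at hp
      rcases hp with rfl | rfl <;> rfl⟩

/-- Branches `1^e 0 → 1^e 0` (`e < d`), `1^d 00 → 1^d 0`, `1^d 01 → 1^(d+1) 0` and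
`1^(d+1) → 1^(d+2)`. -/
def copyTable : ℕ → Finset (List Bool × List Bool)
  | 0 => x0T
  | d + 1 => splice caretTable ([true], [true]) (copyTable d)

lemma represents_xseq (hx0 : Represents x0 x0T) (hx1 : Represents x1 x1T) (d : ℕ) :
    Represents (xseq x0 x1 d) (copyTable d) := by
  induction d with
  | zero => exact hx0
  | succ d ih =>
    refine represents_caretTable.splice (by simp [caretTable]) ih ?_
      (xseq_succ_apply_true hx0 hx1 d)
    intro q hq hne ω
    simp only [caretTable, Finset.mem_insert, Finset.mem_singleton] at hq
    rcases hq with rfl | rfl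
    · exact xseq_succ_apply_false hx0 hx1 d ω
    · exact absurd rfl hne

lemma replicate_mem_copyTable {e d : ℕ} (h : e < d) :
    (List.replicate e true ++ [false], List.replicate e true ++ [false]) ∈ copyTable d := by
  induction d generalizing e with
  | zero => omega
  | succ d ih =>
    cases e with
    | zero => exact mem_splice_of_mem_of_ne (by simp [caretTable]) (by simp)
    | succ e => exact append_mem_splice (ih (by omega))

lemma last_mem_copyTable (d : ℕ) :
    (List.replicate d true ++ [false, false], List.replicate d true ++ [false]) ∈ copyTable d := by
  induction d with
  | zero => simp [copyTable, x0T]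
  | succ d ih => exact append_mem_splice ih

end Xseq

/-- Since `x_m` is the copy of `x0` on the cylinder `1^m`, it only acts on the all-ones branch
`p.1 → 1^ℓ`, below which it grafts the table of `x_(m-ℓ)`. -/
lemma represents_trans_xseq_trans {x0 x1 g f : VPerm} (hx0 : Represents x0 x0T)
    (hx1 : Represents x1 x1T) {T : Finset (List Bool × List Bool)} (hT : Represents g T)
    {ψ : List Bool → List Bool} (hf : ∀ p ∈ T, ∀ ω, f (app p.2 ω) = app (ψ p.2) ω)
    {p : List Bool × List Bool} (hp : p ∈ T) {ℓ m : ℕ} (hpℓ : p.2 = List.replicate ℓ true)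
    (hlen : ∀ q ∈ T, q.2.length ≤ m) :
    Represents ((g.trans (xseq x0 x1 m)).trans f)
      (splice (T.image fun q => (q.1, ψ q.2)) (p.1, ψ p.2) (copyTable (m - ℓ))) := by
  have hℓ : ℓ ≤ m := by simpa [hpℓ] using hlen p hp
  refine (hT.trans hf).splice (Finset.mem_image_of_mem _ hp) (represents_xseq hx0 hx1 _) ?_ ?_
  · intro r hr hne ω
    obtain ⟨q, hq, rfl⟩ := Finset.mem_image.mp hr
    have hqp : q ≠ p := by rintro rfl; exact hne rfl
    rw [Equiv.trans_apply, Equiv.trans_apply, hT.2.2 q hq,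
      xseq_apply_of_false_mem hx0 hx1 (hT.rng.false_mem hp hpℓ hq hqp) (hlen q hq), hf q hq]
  · intro ω
    have hfp := hf p hp
    rw [hpℓ] at hfp ⊢
    rw [Equiv.trans_apply, Equiv.trans_apply, hT.2.2 p hp, hpℓ,
      xseq_apply_replicate_true hx0 hx1 hℓ, hfp]

/-- The branches `p.1 1^e 0 → p.2 1^e 0`, `e < d`, survive in the reduced representation: the
branch `p.1 1^d 00 → p.2 1^d 0` below each of their parents shifts lengths by one more. -/
lemma le_Nbr_of_represents_splice {g : VPerm} {T : Finset (List Bool × List Bool)}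
    {p : List Bool × List Bool} {d : ℕ} (hg : Represents g (splice T p (copyTable d))) :
    d ≤ Nbr g := by
  obtain ⟨Tr, hTr, hred, hcard⟩ := hg.exists_reduced_card_eq_Nbr
  have hB : ∀ e < d, (p.1 ++ (List.replicate e true ++ [false]),
      p.2 ++ (List.replicate e true ++ [false])) ∈ Tr := by
    intro e he
    refine hg.mem_of_shift_ne hTr hred (append_mem_splice (replicate_mem_copyTable he))
      (append_mem_splice (last_mem_copyTable d)) ?_ (by simp; omega)
    show (p.1 ++ (List.replicate e true ++ [false])).dropLast <+:
      p.1 ++ (List.replicate d true ++ [false, false])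
    rw [← List.append_assoc p.1, List.dropLast_concat, List.prefix_append_right_inj]
    exact (List.prefix_replicate_iff.mpr ⟨by simp; omega, by simp⟩).trans
      (List.prefix_append _ _)
  have := Finset.card_le_card_of_injOn (s := Finset.range d) (t := Tr)
    (fun e => (p.1 ++ (List.replicate e true ++ [false]),
      p.2 ++ (List.replicate e true ++ [false])))
    (fun e he => hB e (Finset.mem_range.mp he))
    (fun e _ e' _ h => by simpa using congrArg (fun q => q.1.length) h)
  simpa [hcard] using this

lemma exists_replicate_false_mem_splice {T : Finset (List Bool × List Bool)}
    {p : List Bool × List Bool} {c d : ℕ} (hd : 1 ≤ d)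
    (hc : (List.replicate c false, List.replicate c false) ∈ T) :
    ∃ b ≤ c + 1, (List.replicate b false, List.replicate b false) ∈ splice T p (copyTable d) := by
  by_cases hcp : (List.replicate c false, List.replicate c false) = p
  · refine ⟨c + 1, le_rfl, ?_⟩
    have := append_mem_splice (T := T) (p := p) (replicate_mem_copyTable (e := 0) hd)
    simpa [← hcp, List.replicate_succ'] using this
  · exact ⟨c, by omega, mem_splice_of_mem_of_ne hc hcp⟩

lemma ell0_le_of_represents_splice {g : VPerm} {T : Finset (List Bool × List Bool)}
    {p : List Bool × List Bool} {c d : ℕ} (hg : Represents g (splice T p (copyTable d)))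
    (hd : 2 ≤ d) (hc : (List.replicate c false, List.replicate c false) ∈ T) :
    ell0 g ≤ c + 1 ∧
      IsBranch g (List.replicate (ell0 g) false) (List.replicate (ell0 g) false) := by
  obtain ⟨Tr, hTr, hred, hcard⟩ := hg.exists_reduced_card_eq_Nbr
  obtain ⟨b, hbc, hb⟩ := exists_replicate_false_mem_splice (p := p) (d := d) (by omega) hc
  have hTr_card : 1 < Tr.card := hcard ▸ lt_of_lt_of_le hd (le_Nbr_of_represents_splice hg)
  obtain ⟨a, ha, hab, haTr⟩ := hg.exists_replicate_false_mem hTr hred hTr_card hb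
  rw [ell0_eq_of_mem hTr hred ha haTr]
  exact ⟨by omega, Tr, hTr, hred, haTr⟩

lemma exists_apply_app_eq_of_rotation {h : VPerm} {us ts : List (List Bool)} {n k : ℕ}
    (hts : ts.length = n) (hk : k < n)
    (hh : ∀ i < n, ∀ ω, h (app (ts.getD ((k + i) % n) []) ω) = app (us.getD i []) ω) :
    ∀ v ∈ ts, ∃ y, ∀ ω, h (app v ω) = app y ω := by
  intro v hv
  obtain ⟨j, hj, rfl⟩ := List.getElem_of_mem hv
  have hrot : (k + (j + (n - k)) % n) % n = j := by
    rw [Nat.add_mod_mod, show k + (j + (n - k)) = j + n by omega, Nat.add_mod_right,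
      Nat.mod_eq_of_lt (by omega)]
  refine ⟨us.getD ((j + (n - k)) % n) [], fun ω => ?_⟩
  rw [← hh _ (Nat.mod_lt _ (by omega)), hrot, List.getD_eq_getElem]

lemma getD_zero_eq_replicate_false {us : List (List Bool)}
    (hsorted : us.Pairwise (List.Lex (· < ·))) {a : ℕ} (ha : List.replicate a false ∈ us) :
    ∃ c, us.getD 0 [] = List.replicate c false := by
  obtain ⟨j, hj, hja⟩ := List.getElem_of_mem ha
  rw [List.getD_eq_getElem _ _ (by omega)]
  have hpre : us[0] <+: List.replicate a false := by
    rcases Nat.eq_zero_or_pos j with rfl | hj0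
    · rw [hja]
    · have hlex := List.pairwise_iff_getElem.mp hsorted 0 j (by omega) hj hj0
      rw [hja] at hlex
      exact hlex.prefix_replicate_false
  exact ⟨_, (List.prefix_replicate_iff.mp hpre).2⟩

theorem stmt12_general (x0 x1 c1 : VPerm)
    (hx0 : Represents x0 x0T) (hx1 : Represents x1 x1T)
    (g1 : VPerm) (hg1 : InV g1)
    (us ts : List (List Bool))
    (hlts : ts.length = Nbr g1)
    (hsus : us.Pairwise (List.Lex (· < ·)))
    (hmem : ∀ u t : List Bool, IsBranch g1 u t → u ∈ us ∧ t ∈ ts)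
    (k : ℕ) (hk : k < Nbr g1)
    (hfirst : IsBranch g1 (us.getD 0 []) (ts.getD k []))
    (h : VPerm) (hhT : InT h)
    (hh : ∀ i < Nbr g1, ∀ ω : CSeq,
      h (app (ts.getD ((k + i) % Nbr g1) []) ω) = app (us.getD i []) ω)
    (M : ℕ) (hM : 1 ≤ M)
    (g2 g3 : VPerm)
    (hg2 : g2 = g1.trans (xseq x0 x1 (1 + M * Nbr g1)))
    (hg3 : g3 = g2.trans h) :
    (∀ C : ℝ, 1 ≤ C →
      (∀ t : VPerm, InT t → (wlen {x0, x1, c1} t : ℝ) ≤ C * (Nbr t : ℝ)) →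
      (wlen {x0, x1, c1} h : ℝ) ≤ C * (Nbr g1 : ℝ)) ∧
    (M - 1) * Nbr g1 ≤ Nbr g3 ∧
    ell0 g3 ≤ Nbr g1 ∧
    IsBranch g3 (List.replicate (ell0 g3) false) (List.replicate (ell0 g3) false) := by
  obtain ⟨T, hT, hred, hcard⟩ := hg1.choose_spec.exists_reduced_card_eq_Nbr
  set n := Nbr g1
  have hlen : ∀ q ∈ T, q.2.length < n := fun q hq => hcard ▸ hT.rng.length_lt_card hq
  have hMn : n ≤ M * n := Nat.le_mul_of_pos_left n hM
  choose! φ hφ using exists_apply_app_eq_of_rotation hlts hk hh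
  have hψ : ∀ p ∈ T, ∀ ω, h (app p.2 ω) = app (φ p.2) ω :=
    fun p hp => hφ _ (hmem _ _ ⟨T, hT, hred, hp⟩).2
  obtain ⟨pm, ⟨hpm, hpm1⟩, -⟩ := hT.2.1 fun _ => true
  have hT3 := represents_trans_xseq_trans hx0 hx1 hT hψ hpm hpm1.eq_replicate (m := 1 + M * n)
    fun q hq => by have := hlen q hq; omega
  rw [← hg2, ← hg3] at hT3
  have hd : (M - 1) * n + 2 ≤ 1 + M * n - pm.2.length := by
    have := hlen pm hpm
    rw [Nat.sub_one_mul]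
    omega
  refine ⟨fun C hC hCT => ?_, (le_Nbr_of_represents_splice hT3).trans' (by omega), ?_⟩
  · calc (wlen {x0, x1, c1} h : ℝ) ≤ C * Nbr h := hCT h hhT
      _ ≤ C * n := mul_le_mul_of_nonneg_left
          (by exact_mod_cast hcard ▸ hT.Nbr_le_card_of_apply_app hψ) (by linarith)
  have hfirstT := hfirst.mem hT hred
  obtain ⟨pz, ⟨hpz, hpz0⟩, -⟩ := hT.1 fun _ => false
  obtain ⟨c, hc⟩ := getD_zero_eq_replicate_false hsus
    (hpz0.eq_replicate ▸ (hmem _ _ ⟨T, hT, hred, hpz⟩).1)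
  have hφk : φ (ts.getD k []) = us.getD 0 [] := eq_of_forall_app_eq fun ω => by
    rw [← hψ _ hfirstT, ← hh 0 (by omega), Nat.add_zero, Nat.mod_eq_of_lt hk]
  have hdiag : (List.replicate c false, List.replicate c false) ∈
      T.image fun q => (q.1, φ q.2) := by
    have := Finset.mem_image_of_mem (fun q : List Bool × List Bool => (q.1, φ q.2)) hfirstT
    dsimp only at this
    rwa [hφk, hc] at this
  have hc_lt : c < n := by
    have := hT.dom.length_lt_card hfirstT
    dsimp only at this
    rwa [hc, hcard, List.length_replicate] at this
  obtain ⟨hle, hbranch⟩ := ell0_le_of_represents_splice hT3 (by omega) hdiag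
  exact ⟨by omega, hbranch⟩

/-- Let `g1 ∈ V` with `N(g1) ≥ 4` such that `0` is a strict
prefix of the range code of some branch of `g1`.  List the domain codes
`us` and the range codes `ts` of the reduced representation of `g1` in
(strict) lexicographic order, and let `k` (0-indexed) be such that
`us[0] → ts[k]` is a branch of `g1`.  Let `h` be the element of `T` with
branches `ts[(k+i) mod n] → us[i]`, `i = 0, …, n−1` (this condition pins down
`h` as a permutation of the Cantor set).  Let `M ≥ 1`, `m = 1 + M·N(g1)`,
`g2 = g1·x_m` and `g3 = g2·h` (left-to-right products).  Then:
(1) for every `C ≥ 1` with `|t|_B ≤ C·N(t)` for all `t ∈ T`, one has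
`|h|_B ≤ C·N(g1)`; (2) `N(g3) ≥ (M−1)·N(g1)`; (3) `ℓ0(g3) ≤ N(g1)` and
`0^{ℓ0(g3)} → 0^{ℓ0(g3)}` is a branch of `g3`. -/
theorem stmt12 (x0 x1 c1 : VPerm)
    (hx0 : Represents x0 x0T) (hx1 : Represents x1 x1T)
    (hc1 : Represents c1 c1T)
    (g1 : VPerm) (hg1 : InV g1) (hN : 4 ≤ Nbr g1)
    (hpref : StrictPrefOfBranch g1 [false])
    (us ts : List (List Bool))
    (hlus : us.length = Nbr g1) (hlts : ts.length = Nbr g1)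
    (hsus : us.Pairwise (List.Lex (· < ·)))
    (hsts : ts.Pairwise (List.Lex (· < ·)))
    (hmem : ∀ u t : List Bool, IsBranch g1 u t → u ∈ us ∧ t ∈ ts)
    (k : ℕ) (hk : k < Nbr g1)
    (hfirst : IsBranch g1 (us.getD 0 []) (ts.getD k []))
    (h : VPerm) (hhT : InT h)
    (hh : ∀ i < Nbr g1, ∀ ω : CSeq,
      h (app (ts.getD ((k + i) % Nbr g1) []) ω) = app (us.getD i []) ω)
    (M : ℕ) (hM : 1 ≤ M)
    (g2 g3 : VPerm)
    (hg2 : g2 = g1.trans (xseq x0 x1 (1 + M * Nbr g1)))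
    (hg3 : g3 = g2.trans h) :
    (∀ C : ℝ, 1 ≤ C →
      (∀ t : VPerm, InT t → (wlen {x0, x1, c1} t : ℝ) ≤ C * (Nbr t : ℝ)) →
      (wlen {x0, x1, c1} h : ℝ) ≤ C * (Nbr g1 : ℝ)) ∧
    (M - 1) * Nbr g1 ≤ Nbr g3 ∧
    ell0 g3 ≤ Nbr g1 ∧
    IsBranch g3 (List.replicate (ell0 g3) false) (List.replicate (ell0 g3) false) :=
  stmt12_general x0 x1 c1 hx0 hx1 g1 hg1 us ts hlts hsus hmem k hk hfirst h hhT hh M hM g2 g3 hg2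
    hg3
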